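/- For every p ∈ [0,1], E_0(p,0) = 0, and the function γ ↦ E_0(p,γ) is differentiable from the right at γ = 0 with right derivative equal to the partial mutual information I_0(p): ∂E_0(p,γ)/∂γ |_{γ=0} = I_0(p). -/

import Mathlib

open Finset

/-- Output distribution `P_p(y) = (1−p)·P(y|0) + p·P(y|1)`. -/
noncomputable def outDist {𝒴 : Type} [Fintype 𝒴] (P : ZMod 2 → 𝒴 → ℝ) (p : ℝ)
    (y : 𝒴) : ℝ := (1 - p) * P 0 y + p * P 1 y

/-- Partial mutual information `I_0(p) = Σ_y P(y|0)·log₂(P(y|0)/P_p(y))`. -/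
noncomputable def partialMI0 {𝒴 : Type} [Fintype 𝒴] (P : ZMod 2 → 𝒴 → ℝ) (p : ℝ) : ℝ :=
  ∑ y : 𝒴, P 0 y * Real.logb 2 (P 0 y / outDist P p y)

/-- Gallager-type function
`E_0(p,γ) = −log₂ Σ_y P(y|0)^{1/(1+γ)}·[(1−p)·P(y|0)^{1/(1+γ)} + p·P(y|1)^{1/(1+γ)}]^γ`. -/
noncomputable def gallagerE0 {𝒴 : Type} [Fintype 𝒴] (P : ZMod 2 → 𝒴 → ℝ)
    (p γ : ℝ) : ℝ :=
  -Real.logb 2 (∑ y : 𝒴, P 0 y ^ ((1 : ℝ) / (1 + γ)) *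
    ((1 - p) * P 0 y ^ ((1 : ℝ) / (1 + γ)) + p * P 1 y ^ ((1 : ℝ) / (1 + γ))) ^ γ)

/-!
At `γ = 0` every exponent `1/(1+γ)` equals `1` and every power `[…]^γ` equals `1`, so the sum
inside `E_0` is `Σ_y P(y|0) = 1` and `E_0(p,0) = 0`. The sum is in fact differentiable at
`γ = 0`: differentiating `P(y|0)^{1/(1+γ)}` gives `−P(y|0) ln P(y|0)`, and differentiating
`[…]^γ` gives `ln P_p(y)` (the other term carries the factor `γ`), so the sum has derivative
`Σ_y P(y|0) (ln P_p(y) − ln P(y|0))`. Since the sum equals `1` at `0`, the chain rule for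
`−log₂` turns this into `I_0(p)`.
-/

open Real

section

variable {a b p : ℝ}

lemma hasDerivAt_rpow_one_div_one_add (ha : 0 < a) :
    HasDerivAt (fun γ : ℝ => a ^ ((1 : ℝ) / (1 + γ))) (-(a * log a)) 0 := by
  have hexp : HasDerivAt (fun γ : ℝ => (1 : ℝ) / (1 + γ)) (-1) 0 := by
    have hden : HasDerivAt (fun γ : ℝ => 1 + γ) 1 0 := (hasDerivAt_id 0).const_add 1
    simp only [one_div]
    exact (hden.fun_inv (by norm_num)).congr_deriv (by norm_num)
  exact (hexp.const_rpow ha).congr_deriv (by norm_num; ring)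

lemma hasDerivAt_gallager_term (ha : 0 < a) (hb : 0 < b) (hab : 0 < (1 - p) * a + p * b) :
    HasDerivAt (fun γ : ℝ => a ^ ((1 : ℝ) / (1 + γ)) *
        ((1 - p) * a ^ ((1 : ℝ) / (1 + γ)) + p * b ^ ((1 : ℝ) / (1 + γ))) ^ γ)
      (a * log ((1 - p) * a + p * b) - a * log a) 0 := by
  have hpow_a := hasDerivAt_rpow_one_div_one_add ha
  have hbase := (hpow_a.const_mul (1 - p)).fun_add
    ((hasDerivAt_rpow_one_div_one_add hb).const_mul p)
  have hbase_pos : 0 < (1 - p) * a ^ ((1 : ℝ) / (1 + 0)) + p * b ^ ((1 : ℝ) / (1 + 0)) := by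
    simpa using hab
  refine (hpow_a.fun_mul (hbase.rpow (hasDerivAt_id 0) hbase_pos)).congr_deriv ?_
  simp only [add_zero, div_one, rpow_one, rpow_zero, id_eq]
  ring

end

section

variable {𝒴 : Type} [Fintype 𝒴] {P : ZMod 2 → 𝒴 → ℝ} {p : ℝ}

lemma outDist_pos {y : 𝒴} (h0 : 0 < P 0 y) (h1 : 0 < P 1 y) (hp : p ∈ Set.Icc (0 : ℝ) 1) :
    0 < outDist P p y := by
  obtain ⟨hp0, hp1⟩ := hp
  rcases hp0.eq_or_lt with rfl | hp0
  · simpa [outDist] using h0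
  · exact add_pos_of_nonneg_of_pos (mul_nonneg (by linarith) h0.le) (mul_pos hp0 h1)

variable (P p) in
noncomputable def gallagerSum (γ : ℝ) : ℝ :=
  ∑ y : 𝒴, P 0 y ^ ((1 : ℝ) / (1 + γ)) *
    ((1 - p) * P 0 y ^ ((1 : ℝ) / (1 + γ)) + p * P 1 y ^ ((1 : ℝ) / (1 + γ))) ^ γ

lemma gallagerE0_eq_neg_logb_gallagerSum (γ : ℝ) :
    gallagerE0 P p γ = -logb 2 (gallagerSum P p γ) := rfl

lemma gallagerSum_zero (hP0sum : ∑ y : 𝒴, P 0 y = 1) : gallagerSum P p 0 = 1 := by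
  simpa [gallagerSum] using hP0sum

lemma hasDerivAt_gallagerSum (hPpos : ∀ x y, 0 < P x y) (hp : p ∈ Set.Icc (0 : ℝ) 1) :
    HasDerivAt (gallagerSum P p)
      (∑ y : 𝒴, (P 0 y * log (outDist P p y) - P 0 y * log (P 0 y))) 0 := by
  unfold gallagerSum
  exact HasDerivAt.fun_sum fun y _ =>
    hasDerivAt_gallager_term (hPpos 0 y) (hPpos 1 y) (outDist_pos (hPpos 0 y) (hPpos 1 y) hp)

lemma partialMI0_eq_neg_sum_div_log_two (hPpos : ∀ x y, 0 < P x y)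
    (hp : p ∈ Set.Icc (0 : ℝ) 1) :
    partialMI0 P p =
      -((∑ y : 𝒴, (P 0 y * log (outDist P p y) - P 0 y * log (P 0 y))) / log 2) := by
  rw [partialMI0, ← neg_div, ← Finset.sum_neg_distrib, Finset.sum_div]
  refine Finset.sum_congr rfl fun y _ => ?_
  rw [logb, log_div (hPpos 0 y).ne' (outDist_pos (hPpos 0 y) (hPpos 1 y) hp).ne']
  ring

end

/-- For every `p ∈ [0,1]`, `E_0(p,0) = 0`, and `γ ↦ E_0(p,γ)` is differentiable from
the right at `γ = 0` with right derivative equal to the partial mutual information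
`I_0(p)`. -/
theorem gallagerE0_zero_and_right_deriv
    (𝒴 : Type) [Fintype 𝒴]
    (P : ZMod 2 → 𝒴 → ℝ)
    (hPpos : ∀ x y, 0 < P x y) (hPsum : ∀ x, ∑ y : 𝒴, P x y = 1)
    (p : ℝ) (hp : p ∈ Set.Icc (0 : ℝ) 1) :
    gallagerE0 P p 0 = 0 ∧
    HasDerivWithinAt (fun γ => gallagerE0 P p γ) (partialMI0 P p) (Set.Ici (0 : ℝ)) 0 := by
  have hsum0 : gallagerSum P p 0 = 1 := gallagerSum_zero (hPsum 0)
  refine ⟨by rw [gallagerE0_eq_neg_logb_gallagerSum, hsum0, logb_one, neg_zero], ?_⟩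
  have hderiv := (((hasDerivAt_gallagerSum hPpos hp).log (by simp [hsum0])).div_const
    (log 2)).neg
  rw [hsum0, div_one] at hderiv
  rw [partialMI0_eq_neg_sum_div_log_two hPpos hp]
  exact hderiv.hasDerivWithinAt
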